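/- (Multivariate influence of sample weights.) For each training index i and any function f : E → ℝ differentiable at θ*, the partial derivative of ε ↦ f(θ(ε)) at ε = 0 in the i-th coordinate equals ∂/∂ε_i f(θ(ε))|_{ε=0} = −⟨∇f(θ*), H⁻¹(∇ℓ_i(θ*))⟩. -/

import Mathlib

/-!
Differentiating the stationarity condition `Σⱼ (1/n + εⱼ) ∇ℓⱼ(θ(ε)) = 0` at `ε = 0` in the
direction `eᵢ` gives `H (∂θ/∂εᵢ) + ∇ℓᵢ(θ*) = 0`, since only the `i`-th weight moves and the
average of the per-sample Hessians is `H`. Hence `∂θ/∂εᵢ = -H⁻¹ ∇ℓᵢ(θ*)`, and the chain rule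
with `Df(θ*) = ⟪∇f(θ*), ·⟫` gives the claim.
-/

open Topology InnerProductSpace

section Gradient

variable {E : Type*} [NormedAddCommGroup E] [InnerProductSpace ℝ E] [CompleteSpace E]

theorem ContDiff.gradient {f : E → ℝ} {m : WithTop ℕ∞} (hf : ContDiff ℝ (m + 1) f) :
    ContDiff ℝ m (gradient f) :=
  (toDual ℝ E).symm.contDiff.comp (hf.fderiv_right le_rfl)

theorem HasGradientAt.const_mul {f : E → ℝ} {g x : E} (hf : HasGradientAt f g x) (c : ℝ) :
    HasGradientAt (fun w => c * f w) (c • g) x := by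
  rw [hasGradientAt_iff_hasFDerivAt, map_smul] at *
  exact hf.const_mul c

theorem HasGradientAt.fun_sum {ι : Type*} {s : Finset ι} {f : ι → E → ℝ} {g : ι → E} {x : E}
    (hf : ∀ j ∈ s, HasGradientAt (f j) (g j) x) :
    HasGradientAt (fun w => ∑ j ∈ s, f j w) (∑ j ∈ s, g j) x := by
  simp only [hasGradientAt_iff_hasFDerivAt, map_sum] at *
  exact HasFDerivAt.fun_sum hf

theorem gradient_const_mul_sum {ι : Type*} (s : Finset ι) {f : ι → E → ℝ} (c : ℝ)
    (hf : ∀ j ∈ s, Differentiable ℝ (f j)) :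
    gradient (fun w => c * ∑ j ∈ s, f j w) = fun w => c • ∑ j ∈ s, gradient (f j) w :=
  gradient_eq fun w =>
    (HasGradientAt.fun_sum fun j hj => ((hf j hj) w).hasGradientAt).const_mul c

end Gradient

theorem HasFDerivAt.eq_zero_of_eventuallyEq_zero {E F : Type*} [NormedAddCommGroup E]
    [NormedSpace ℝ E] [NormedAddCommGroup F] [NormedSpace ℝ F] {f : E → F} {f' : E →L[ℝ] F}
    {x : E} (hf : HasFDerivAt f f' x) (h : f =ᶠ[𝓝 x] 0) : f' = 0 :=
  hf.unique ((hasFDerivAt_const 0 x).congr_of_eventuallyEq h)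

theorem linearized_weighted_stationarity {ι E F : Type*} [Fintype ι]
    [NormedAddCommGroup E] [NormedSpace ℝ E] [NormedAddCommGroup F] [NormedSpace ℝ F]
    {G : ι → E → F} {G' : ι → E →L[ℝ] F} {θ : (ι → ℝ) → E} {θ' : (ι → ℝ) →L[ℝ] E} (c : ℝ)
    (hG : ∀ j, HasFDerivAt (G j) (G' j) (θ 0)) (hθ : HasFDerivAt θ θ' 0)
    (hcrit : ∀ᶠ ε in 𝓝 0, ∑ j, (c + ε j) • G j (θ ε) = 0) (v : ι → ℝ) :
    c • ∑ j, G' j (θ' v) + ∑ j, v j • G j (θ 0) = 0 := by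
  have hweight : ∀ j, HasFDerivAt (fun ε : ι → ℝ => c + ε j) (ContinuousLinearMap.proj j) 0 :=
    fun j => (hasFDerivAt_apply (𝕜 := ℝ) j (0 : ι → ℝ)).const_add c
  have hF := HasFDerivAt.fun_sum fun j (_ : j ∈ Finset.univ) =>
    (hweight j).smul ((hG j).comp 0 hθ)
  have := congrArg (· v) (hF.eq_zero_of_eventuallyEq_zero hcrit)
  simpa [Finset.smul_sum, Finset.sum_add_distrib] using this

theorem multivariate_influence_general
    {E : Type*} [NormedAddCommGroup E] [InnerProductSpace ℝ E] [FiniteDimensional ℝ E]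
    (n : ℕ) (ℓ : Fin n → E → ℝ) (hℓ : ∀ i, ContDiff ℝ 2 (ℓ i))
    (θ : (Fin n → ℝ) → E) (θs : E) (hθ0 : θ 0 = θs) (hθ : DifferentiableAt ℝ θ 0)
    (H : E ≃L[ℝ] E)
    (hH : (H : E →L[ℝ] E) =
      fderiv ℝ (gradient (fun w => (1 / n : ℝ) * ∑ i, ℓ i w)) θs)
    (hcrit : ∀ᶠ ε in nhds (0 : Fin n → ℝ),
      ∑ i, ((1 / n : ℝ) + ε i) • gradient (ℓ i) (θ ε) = 0)
    (f : E → ℝ) (hf : DifferentiableAt ℝ f θs) (i : Fin n) :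
    fderiv ℝ (fun ε => f (θ ε)) 0 (Pi.single i 1) =
      -(@inner ℝ E _ (gradient f θs) (H.symm (gradient (ℓ i) θs))) := by
  subst hθ0
  have hgrad : ∀ j, Differentiable ℝ (gradient (ℓ j)) := fun j =>
    ((hℓ j).gradient (m := 1)).differentiable one_ne_zero
  have hHess : (H : E →L[ℝ] E) = (1 / n : ℝ) • ∑ j, fderiv ℝ (gradient (ℓ j)) (θ 0) := by
    rw [hH, gradient_const_mul_sum _ _ fun j _ => (hℓ j).differentiable two_ne_zero]
    exact ((HasFDerivAt.fun_sum fun j _ => (hgrad j _).hasFDerivAt).const_smul _).fderiv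
  have hstationary := linearized_weighted_stationarity _
    (fun j => (hgrad j (θ 0)).hasFDerivAt) hθ.hasFDerivAt hcrit (Pi.single i 1)
  have hresponse : fderiv ℝ θ 0 (Pi.single i 1) = -H.symm (gradient (ℓ i) (θ 0)) := by
    rw [← map_neg, H.eq_symm_apply, ← H.coe_coe, hHess, eq_neg_iff_add_eq_zero]
    simpa [Finset.smul_sum] using hstationary
  rw [fderiv_fun_comp 0 hf hθ, ContinuousLinearMap.comp_apply, hresponse, map_neg,
    ← inner_gradient_left]

/-- multivariate influence of sample weights: if `θ(ε)` is a critical point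
of the weighted empirical risk `Σᵢ (1/n + εᵢ)·ℓᵢ` for all `ε` near `0 ∈ ℝⁿ`, `θ` is
differentiable at `0` with `θ(0) = θ*`, and the Hessian `H = ∇²L(θ*)` of the empirical risk
`L = (1/n)·Σᵢ ℓᵢ` is invertible, then for any `f` differentiable at `θ*` and any index `i`,
`∂/∂εᵢ f(θ(ε))|₀ = −⟨∇f(θ*), H⁻¹(∇ℓᵢ(θ*))⟩`. -/
theorem multivariate_influence
    {E : Type*} [NormedAddCommGroup E] [InnerProductSpace ℝ E] [FiniteDimensional ℝ E]
    (n : ℕ) (hn : 1 ≤ n) (ℓ : Fin n → E → ℝ) (hℓ : ∀ i, ContDiff ℝ 2 (ℓ i))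
    (θ : (Fin n → ℝ) → E) (θs : E) (hθ0 : θ 0 = θs) (hθ : DifferentiableAt ℝ θ 0)
    (H : E ≃L[ℝ] E)
    (hH : (H : E →L[ℝ] E) =
      fderiv ℝ (gradient (fun w => (1 / n : ℝ) * ∑ i, ℓ i w)) θs)
    (hcrit : ∀ᶠ ε in nhds (0 : Fin n → ℝ),
      ∑ i, ((1 / n : ℝ) + ε i) • gradient (ℓ i) (θ ε) = 0)
    (f : E → ℝ) (hf : DifferentiableAt ℝ f θs) (i : Fin n) :
    fderiv ℝ (fun ε => f (θ ε)) 0 (Pi.single i 1) =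
      -(@inner ℝ E _ (gradient f θs) (H.symm (gradient (ℓ i) θs))) :=
  multivariate_influence_general n ℓ hℓ θ θs hθ0 hθ H hH hcrit f hf i
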